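/- Let {X_n} have periodic dependence with period d, satisfy AIM(x_n) with separation sequence q_n and mixing coefficients α_n, and suppose n·F̄(x_n) → τ > 0 as n → ∞. Then for each fixed integer k ≥ 1, writing n′ = ⌊n/k⌋, one has P(M_n ≤ x_n) − [P(M_{n′} ≤ x_n)]^k → 0 as n → ∞. -/

import Mathlib

/-!
Cut `{1,…,n}` into `k` consecutive blocks of length `N = ⌊n/k⌋`, leaving fewer than `k` indices
over. Deleting `m` indices from `S` changes `P(M(S) ≤ xₙ)` by at most `m·F̄(xₙ)`. To split the
`(j+1)`-st block off the first `j`, delete the `qₙ` indices just before it: AIM then factorizes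
the probability up to `αₙ`, and periodicity moves the block to within `d` of the origin, where it
differs from the first block in at most `2d` indices. Telescoping over the blocks bounds the
difference by `(k-1)(αₙ + (2qₙ + 2d)F̄(xₙ)) + k·F̄(xₙ)`, which tends to `0` because
`F̄(xₙ) = O(1/n)` and `qₙ = o(n)`.
-/

open MeasureTheory Filter Finset Asymptotics

/-- Probability of an event as a real number. -/
noncomputable def pr {Ω : Type*} [MeasurableSpace Ω] (P : Measure Ω) (A : Set Ω) : ℝ :=
  (P A).toReal

/-- The event that `X i ≤ x` for every index `i` in the set `S`;
this is the event `{M(S) ≤ x}` where `M(S) = max {X i : i ∈ S}`. -/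
def allLe {Ω : Type*} (X : ℕ → Ω → ℝ) (S : Set ℕ) (x : ℝ) : Set Ω :=
  {ω | ∀ i ∈ S, X i ω ≤ x}

/-- `α` is a sequence of AIM mixing coefficients for `X` relative to thresholds `xs`
with separation sequence `q`: for any two intervals `I₁ = [a,b]`, `I₂ = [b+qₙ+1, c]`
contained in `{1,…,n}`, separated by `qₙ`, each of cardinality at least `qₙ`,
the maximum-based discrepancy is bounded by `α n`. -/
def AIMBound {Ω : Type*} [MeasurableSpace Ω] (P : Measure Ω) (X : ℕ → Ω → ℝ)
    (xs : ℕ → ℝ) (q : ℕ → ℕ) (α : ℕ → ℝ) : Prop :=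
  ∀ n a b c : ℕ, 1 ≤ a → a ≤ b → b + q n + 1 ≤ c → c ≤ n →
    q n ≤ b + 1 - a → q n ≤ c - (b + q n) →
    |pr P (allLe X (Set.Icc a b ∪ Set.Icc (b + q n + 1) c) (xs n)) -
      pr P (allLe X (Set.Icc a b) (xs n)) *
        pr P (allLe X (Set.Icc (b + q n + 1) c) (xs n))| ≤ α n

/-- `X` has periodic dependence with period `d`: any finite-dimensional joint
distribution is invariant under shifting all indices by `d`. -/
def PeriodicDep {Ω : Type*} [MeasurableSpace Ω] (P : Measure Ω) (X : ℕ → Ω → ℝ)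
    (d : ℕ) : Prop :=
  ∀ (k : ℕ) (t : Fin k → ℕ), (∀ i, 1 ≤ t i) →
    Measure.map (fun ω (i : Fin k) => X (t i) ω) P =
      Measure.map (fun ω (i : Fin k) => X (t i + d) ω) P

lemma abs_mul_sub_mul_le {a b a' b' : ℝ} (hb : |b| ≤ 1) (ha' : |a'| ≤ 1) :
    |a * b - a' * b'| ≤ |a - a'| + |b - b'| := by
  calc |a * b - a' * b'| = |(a - a') * b + a' * (b - b')| := by ring_nf
    _ ≤ |a - a'| * |b| + |a'| * |b - b'| := by rw [← abs_mul, ← abs_mul]; exact abs_add_le _ _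
    _ ≤ |a - a'| + |b - b'| :=
        add_le_add (mul_le_of_le_one_right (abs_nonneg _) hb)
          (mul_le_of_le_one_left (abs_nonneg _) ha')

lemma abs_sub_pow_le_of_abs_sub_mul_le {p : ℕ → ℝ} {ε : ℝ} (hp : |p 1| ≤ 1) {k : ℕ}
    (hk : 1 ≤ k) (hstep : ∀ j, 1 ≤ j → j < k → |p (j + 1) - p j * p 1| ≤ ε) :
    |p k - p 1 ^ k| ≤ (k - 1) * ε := by
  induction k, hk using Nat.le_induction with
  | base => simp
  | succ k hk ih =>
    have hprev := ih fun j hj hjk => hstep j hj (by omega)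
    calc |p (k + 1) - p 1 ^ (k + 1)|
        = |(p (k + 1) - p k * p 1) + (p k - p 1 ^ k) * p 1| := by ring_nf
      _ ≤ ε + (k - 1) * ε := by
        rw [← one_mul ((k - 1 : ℝ) * ε)]
        refine (abs_add_le _ _).trans (add_le_add (hstep k hk (by omega)) ?_)
        rw [abs_mul, mul_comm]
        exact mul_le_mul hp hprev (abs_nonneg _) zero_le_one
      _ = ((k + 1 : ℕ) - 1) * ε := by push_cast; ring

lemma allLe_anti {Ω : Type*} {X : ℕ → Ω → ℝ} {S T : Set ℕ} (h : S ⊆ T) (x : ℝ) :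
    allLe X T x ⊆ allLe X S x :=
  fun _ hω i hi => hω i (h hi)

lemma allLe_Icc_add_eq_preimage {Ω : Type*} (X : ℕ → Ω → ℝ) (a b s : ℕ) (x : ℝ) :
    allLe X (Set.Icc (a + s) (b + s)) x =
      (fun ω (i : Fin (b + 1 - a)) => X (a + i + s) ω) ⁻¹' Set.univ.pi fun _ => Set.Iic x := by
  ext ω
  simp only [allLe, Set.mem_ofPred_eq, Set.mem_preimage, Set.mem_univ_pi, Set.mem_Iic,
    Set.mem_Icc]
  constructor
  · intro h i
    exact h _ ⟨by omega, by omega⟩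
  · rintro h i ⟨hlo, hhi⟩
    simpa [show a + (i - s - a) + s = i by omega] using h ⟨i - s - a, by omega⟩

section Blocks

variable {Ω : Type*} [MeasurableSpace Ω] {P : Measure Ω} {X : ℕ → Ω → ℝ}

lemma pr_eq_measureReal (A : Set Ω) : pr P A = P.real A := rfl

lemma abs_measureReal_le_one [IsProbabilityMeasure P] (A : Set Ω) : |P.real A| ≤ 1 := by
  rw [abs_of_nonneg measureReal_nonneg]
  exact measureReal_le_one

lemma measureReal_lt_eq_one_sub [IsProbabilityMeasure P] {F : ℝ → ℝ} {i : ℕ}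
    (hXi : Measurable (X i)) (hF : ∀ t : ℝ, pr P {ω | X i ω ≤ t} = F t) (x : ℝ) :
    P.real {ω | x < X i ω} = 1 - F x := by
  have hcompl : {ω | x < X i ω} = {ω | X i ω ≤ x}ᶜ := by ext ω; simp
  have hle : MeasurableSet {ω | X i ω ≤ x} := hXi measurableSet_Iic
  rw [hcompl, probReal_compl_eq_one_sub hle, ← hF, pr_eq_measureReal]

lemma measureReal_allLe_le_add [IsFiniteMeasure P] {S T : Set ℕ} {x c : ℝ} (A : Finset ℕ)
    (hTS : T ⊆ S ∪ A) (htail : ∀ i ∈ A, P.real {ω | x < X i ω} ≤ c) :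
    P.real (allLe X S x) ≤ P.real (allLe X T x) + #A * c := by
  have hcover : allLe X S x ⊆ allLe X T x ∪ ⋃ i ∈ A, {ω | x < X i ω} := by
    intro ω hω
    by_contra hbad
    simp only [allLe, Set.mem_union, Set.mem_ofPred_eq, Set.mem_iUnion, not_or, not_exists,
      not_lt, not_forall] at hω hbad
    obtain ⟨⟨i, hiT, hix⟩, hA⟩ := hbad
    rcases hTS hiT with hiS | hiA
    · exact hix (hω i hiS)
    · exact hix (hA i hiA)
  calc P.real (allLe X S x)
      ≤ P.real (allLe X T x) + ∑ i ∈ A, P.real {ω | x < X i ω} :=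
        (measureReal_mono hcover).trans
          ((measureReal_union_le _ _).trans (by gcongr; exact measureReal_biUnion_finset_le _ _))
    _ ≤ P.real (allLe X T x) + #A * c := by
        gcongr
        simpa using Finset.sum_le_card_nsmul A _ c htail

lemma abs_measureReal_allLe_sub_le [IsFiniteMeasure P] {S T : Set ℕ} {x c : ℝ} (A : Finset ℕ)
    (hST : S ⊆ T) (hTS : T ⊆ S ∪ A) (htail : ∀ i ∈ A, P.real {ω | x < X i ω} ≤ c) :
    |P.real (allLe X T x) - P.real (allLe X S x)| ≤ #A * c := by
  have hle : P.real (allLe X T x) ≤ P.real (allLe X S x) := measureReal_mono (allLe_anti hST x)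
  rw [abs_sub_comm, abs_of_nonneg (by linarith)]
  linarith [measureReal_allLe_le_add A hTS htail]

lemma abs_measureReal_allLe_sub_le_of_subset_union_Ico [IsFiniteMeasure P] {S T : Set ℕ}
    {x c : ℝ} {a m : ℕ} (ha : 1 ≤ a) (htail : ∀ i, 1 ≤ i → P.real {ω | x < X i ω} ≤ c)
    (hST : S ⊆ T) (hTS : T ⊆ S ∪ Set.Ico a (a + m)) :
    |P.real (allLe X T x) - P.real (allLe X S x)| ≤ m * c := by
  have hcard : #(Finset.Ico a (a + m)) = m := by simp
  rw [← hcard]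
  exact abs_measureReal_allLe_sub_le _ hST (by rwa [coe_Ico])
    fun i hi => htail i (ha.trans (Finset.mem_Ico.1 hi).1)

lemma PeriodicDep.measureReal_allLe_Icc_add {d : ℕ} (hper : PeriodicDep P X d)
    (hmeas : ∀ i, Measurable (X i)) {a : ℕ} (ha : 1 ≤ a) (b : ℕ) (x : ℝ) :
    P.real (allLe X (Set.Icc (a + d) (b + d)) x) = P.real (allLe X (Set.Icc a b) x) := by
  have hbox : MeasurableSet (Set.univ.pi fun (_ : Fin (b + 1 - a)) => Set.Iic x) :=
    MeasurableSet.univ_pi fun _ => measurableSet_Iic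
  have hunshifted := allLe_Icc_add_eq_preimage X a b 0 x
  simp only [add_zero] at hunshifted
  rw [allLe_Icc_add_eq_preimage, hunshifted, ← map_measureReal_apply (by fun_prop) hbox,
    ← map_measureReal_apply (by fun_prop) hbox, hper _ (fun i => a + i) fun i => by omega]

lemma PeriodicDep.measureReal_allLe_Icc_add_mul {d : ℕ} (hper : PeriodicDep P X d)
    (hmeas : ∀ i, Measurable (X i)) {a : ℕ} (ha : 1 ≤ a) (b : ℕ) (x : ℝ) (m : ℕ) :
    P.real (allLe X (Set.Icc (a + d * m) (b + d * m)) x) = P.real (allLe X (Set.Icc a b) x) := by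
  induction m with
  | zero => simp
  | succ m ih =>
    rw [mul_add_one, ← add_assoc, ← add_assoc,
      hper.measureReal_allLe_Icc_add hmeas (by omega), ih]

lemma PeriodicDep.abs_measureReal_allLe_block_sub_le [IsProbabilityMeasure P] {d : ℕ}
    (hd : 1 ≤ d) (hper : PeriodicDep P X d) (hmeas : ∀ i, Measurable (X i)) {x c : ℝ}
    (htail : ∀ i, 1 ≤ i → P.real {ω | x < X i ω} ≤ c) (s N : ℕ) :
    |P.real (allLe X (Set.Icc (s + 1) (s + N)) x) - P.real (allLe X (Set.Icc 1 N) x)|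
      ≤ 2 * d * c := by
  set r := s % d
  have hr : r < d := Nat.mod_lt _ hd
  have hs : s = r + d * (s / d) := (Nat.mod_add_div s d).symm
  have hc : 0 ≤ c := measureReal_nonneg.trans (htail 1 le_rfl)
  have hshift : P.real (allLe X (Set.Icc (s + 1) (s + N)) x) =
      P.real (allLe X (Set.Icc (r + 1) (r + N)) x) := by
    rw [show s + 1 = r + 1 + d * (s / d) by omega, show s + N = r + N + d * (s / d) by omega]
    exact hper.measureReal_allLe_Icc_add_mul hmeas (by omega) _ x _
  have hfront := abs_measureReal_allLe_sub_le_of_subset_union_Ico (X := X) (P := P)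
    (S := Set.Icc (r + 1) (r + N)) (T := Set.Icc 1 (r + N)) (a := 1) (m := r) le_rfl htail
    (Set.Icc_subset_Icc (by omega) le_rfl)
    (fun i hi => by simp only [Set.mem_union, Set.mem_Icc, Set.mem_Ico] at hi ⊢; omega)
  have hback := abs_measureReal_allLe_sub_le_of_subset_union_Ico (X := X) (P := P)
    (S := Set.Icc 1 N) (T := Set.Icc 1 (r + N)) (a := N + 1) (m := r) (by omega) htail
    (Set.Icc_subset_Icc le_rfl (by omega))
    (fun i hi => by simp only [Set.mem_union, Set.mem_Icc, Set.mem_Ico] at hi ⊢; omega)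
  have hrc : (r : ℝ) * c ≤ d * c := by gcongr
  rw [abs_sub_comm] at hfront
  rw [hshift]
  linarith [abs_sub_le (P.real (allLe X (Set.Icc (r + 1) (r + N)) x))
    (P.real (allLe X (Set.Icc 1 (r + N)) x)) (P.real (allLe X (Set.Icc 1 N) x))]

lemma abs_measureReal_allLe_Icc_add_sub_mul_le [IsProbabilityMeasure P] {d : ℕ} (hd : 1 ≤ d)
    (hper : PeriodicDep P X d) (hmeas : ∀ i, Measurable (X i)) {xs : ℕ → ℝ} {q : ℕ → ℕ}
    {α : ℕ → ℝ} (hmix : AIMBound P X xs q α) {n M N : ℕ} {c : ℝ}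
    (htail : ∀ i, 1 ≤ i → P.real {ω | xs n < X i ω} ≤ c)
    (hN : 2 * q n + 1 ≤ N) (hNM : N ≤ M) (hMN : M + N ≤ n) :
    |P.real (allLe X (Set.Icc 1 (M + N)) (xs n)) -
        P.real (allLe X (Set.Icc 1 M) (xs n)) * P.real (allLe X (Set.Icc 1 N) (xs n))|
      ≤ α n + (2 * q n + 2 * d) * c := by
  set Q := q n
  set b := M - Q
  have hAIM := hmix n 1 b (M + N) le_rfl (by omega) (by omega) hMN (by omega) (by omega)
  rw [show b + q n + 1 = M + 1 by omega] at hAIM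
  simp only [pr_eq_measureReal] at hAIM
  have hgap := abs_measureReal_allLe_sub_le_of_subset_union_Ico (P := P) (X := X)
    (S := Set.Icc 1 b ∪ Set.Icc (M + 1) (M + N)) (T := Set.Icc 1 (M + N)) (a := b + 1) (m := Q)
    (by omega) htail (Set.union_subset (Set.Icc_subset_Icc le_rfl (by omega))
      (Set.Icc_subset_Icc (by omega) le_rfl))
    (fun i hi => by simp only [Set.mem_union, Set.mem_Icc, Set.mem_Ico] at hi ⊢; omega)
  have hhead := abs_measureReal_allLe_sub_le_of_subset_union_Ico (P := P) (X := X)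
    (S := Set.Icc 1 b) (T := Set.Icc 1 M) (a := b + 1) (m := Q) (by omega) htail
    (Set.Icc_subset_Icc le_rfl (by omega))
    (fun i hi => by simp only [Set.mem_union, Set.mem_Icc, Set.mem_Ico] at hi ⊢; omega)
  have hblock := hper.abs_measureReal_allLe_block_sub_le hd hmeas htail M N
  have hprod := abs_mul_sub_mul_le (a := P.real (allLe X (Set.Icc 1 b) (xs n)))
    (b' := P.real (allLe X (Set.Icc 1 N) (xs n)))
    (abs_measureReal_le_one (P := P) (allLe X (Set.Icc (M + 1) (M + N)) (xs n)))
    (abs_measureReal_le_one (P := P) (allLe X (Set.Icc 1 M) (xs n)))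
  rw [abs_sub_comm] at hhead
  set u := P.real (allLe X (Set.Icc 1 b ∪ Set.Icc (M + 1) (M + N)) (xs n))
  set v := P.real (allLe X (Set.Icc 1 b) (xs n))
  set w := P.real (allLe X (Set.Icc (M + 1) (M + N)) (xs n))
  set pM := P.real (allLe X (Set.Icc 1 M) (xs n))
  set pN := P.real (allLe X (Set.Icc 1 N) (xs n))
  linarith [abs_sub_le (P.real (allLe X (Set.Icc 1 (M + N)) (xs n))) u (pM * pN),
    abs_sub_le u (v * w) (pM * pN)]

lemma abs_measureReal_allLe_sub_pow_le [IsProbabilityMeasure P] {d : ℕ} (hd : 1 ≤ d)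
    (hper : PeriodicDep P X d) (hmeas : ∀ i, Measurable (X i)) {xs : ℕ → ℝ} {q : ℕ → ℕ}
    {α : ℕ → ℝ} (hmix : AIMBound P X xs q α) {n k : ℕ} {c : ℝ}
    (htail : ∀ i, 1 ≤ i → P.real {ω | xs n < X i ω} ≤ c) (hk : 1 ≤ k)
    (hN : 2 * q n + 1 ≤ n / k) :
    |P.real (allLe X (Set.Icc 1 n) (xs n)) - P.real (allLe X (Set.Icc 1 (n / k)) (xs n)) ^ k|
      ≤ (k - 1) * (α n + (2 * q n + 2 * d) * c) + k * c := by
  set N := n / k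
  set p : ℕ → ℝ := fun j => P.real (allLe X (Set.Icc 1 (j * N)) (xs n))
  have hkN : k * N ≤ n := Nat.mul_div_le n k
  have hp1 : p 1 = P.real (allLe X (Set.Icc 1 N) (xs n)) := by simp only [p, one_mul]
  have hblocks : |p k - p 1 ^ k| ≤ (k - 1) * (α n + (2 * q n + 2 * d) * c) := by
    refine abs_sub_pow_le_of_abs_sub_mul_le (abs_measureReal_le_one _) hk fun j hj hjk => ?_
    have hjN : j * N + N ≤ k * N := by rw [← add_one_mul]; exact Nat.mul_le_mul_right N hjk
    simp only [p, add_one_mul, one_mul]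
    exact abs_measureReal_allLe_Icc_add_sub_mul_le hd hper hmeas hmix htail hN
      (Nat.le_mul_of_pos_left N hj) (hjN.trans hkN)
  have hc : 0 ≤ c := measureReal_nonneg.trans (htail 1 le_rfl)
  have hrest : |P.real (allLe X (Set.Icc 1 n) (xs n)) - p k| ≤ k * c := by
    have hdiv : n % k + k * N = n := Nat.mod_add_div n k
    refine (abs_measureReal_allLe_sub_le_of_subset_union_Ico (S := Set.Icc 1 (k * N))
      (T := Set.Icc 1 n) (a := k * N + 1) (m := n % k) (by omega) htail
      (Set.Icc_subset_Icc le_rfl hkN)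
      (fun i hi => by simp only [Set.mem_union, Set.mem_Icc, Set.mem_Ico] at hi ⊢; omega)).trans ?_
    gcongr
    exact_mod_cast (Nat.mod_lt n (by omega)).le
  rw [← hp1]
  linarith [abs_sub_le (P.real (allLe X (Set.Icc 1 n) (xs n))) (p k) (p 1 ^ k)]

end Blocks

lemma tendsto_mul_zero_of_isLittleO {g f : ℕ → ℝ} {τ : ℝ}
    (hg : g =o[atTop] (fun n : ℕ => (n : ℝ)))
    (hf : Tendsto (fun n : ℕ => (n : ℝ) * f n) atTop (nhds τ)) :
    Tendsto (fun n => g n * f n) atTop (nhds 0) := by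
  have h := hg.tendsto_div_nhds_zero.mul hf
  rw [zero_mul] at h
  refine h.congr' ?_
  filter_upwards [eventually_ne_atTop 0] with n hn
  field_simp

lemma eventually_two_mul_add_one_le_div {q : ℕ → ℕ}
    (hq : (fun n : ℕ => (q n : ℝ)) =o[atTop] (fun n : ℕ => (n : ℝ))) {k : ℕ} (hk : 1 ≤ k) :
    ∀ᶠ n in atTop, 2 * q n + 1 ≤ n / k := by
  have hk' : (0 : ℝ) < k := by exact_mod_cast hk
  filter_upwards [hq.bound (show (0 : ℝ) < 1 / (4 * k) by positivity),
    eventually_ge_atTop (2 * k)] with n hqn hn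
  rw [Nat.le_div_iff_mul_le (by omega)]
  rw [Real.norm_natCast, Real.norm_natCast, div_mul_eq_mul_div, one_mul,
    le_div_iff₀ (by positivity)] at hqn
  have hn' : (2 * k : ℝ) ≤ n := by exact_mod_cast hn
  have : ((2 * q n + 1) * k : ℝ) ≤ n := by nlinarith
  exact_mod_cast this

theorem stmt14_general {Ω : Type*} [MeasurableSpace Ω] (P : Measure Ω) [IsProbabilityMeasure P]
    (X : ℕ → Ω → ℝ) (F : ℝ → ℝ) (xs : ℕ → ℝ) (q : ℕ → ℕ) (α : ℕ → ℝ)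
    (d : ℕ) (hd : 1 ≤ d) (hper : PeriodicDep P X d)
    (τ : ℝ)
    (hmeas : ∀ i, Measurable (X i))
    (hF : ∀ i, 1 ≤ i → ∀ t : ℝ, pr P {ω | X i ω ≤ t} = F t)
    (hq : (fun n : ℕ => (q n : ℝ)) =o[atTop] (fun n : ℕ => (n : ℝ)))
    (hα : Tendsto α atTop (nhds 0))
    (hbd : AIMBound P X xs q α)
    (hFbar : Tendsto (fun n : ℕ => (n : ℝ) * (1 - F (xs n))) atTop (nhds τ))
    (k : ℕ) (hk : 1 ≤ k) :
    Tendsto (fun n : ℕ =>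
      pr P (allLe X (Set.Icc 1 n) (xs n)) -
        (pr P (allLe X (Set.Icc 1 (n / k)) (xs n))) ^ k)
      atTop (nhds 0) := by
  have htail : ∀ n i, 1 ≤ i → P.real {ω | xs n < X i ω} ≤ 1 - F (xs n) := fun n i hi =>
    (measureReal_lt_eq_one_sub (hmeas i) (hF i hi) (xs n)).le
  have hFbar0 : Tendsto (fun n => 1 - F (xs n)) atTop (nhds 0) := by
    simpa using tendsto_mul_zero_of_isLittleO (g := fun _ => 1)
      ((isLittleO_one_left_iff ℝ).2
        (tendsto_norm_atTop_atTop.comp tendsto_natCast_atTop_atTop)) hFbar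
  have hqFbar0 := tendsto_mul_zero_of_isLittleO hq hFbar
  have hbound : Tendsto (fun n => ((k : ℝ) - 1) * (α n + (2 * q n + 2 * d) * (1 - F (xs n)))
      + k * (1 - F (xs n))) atTop (nhds 0) := by
    have h := ((hα.add ((hqFbar0.const_mul 2).add (hFbar0.const_mul (2 * d : ℝ)))).const_mul
      ((k : ℝ) - 1)).add (hFbar0.const_mul (k : ℝ))
    simp only [mul_zero, add_zero] at h
    exact h.congr fun n => by ring
  refine squeeze_zero_norm' ?_ hbound
  filter_upwards [eventually_two_mul_add_one_le_div hq hk] with n hn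
  exact abs_measureReal_allLe_sub_pow_le hd hper hmeas hbd (htail n) hk hn

/-- first step of the proof of Theorem PeriodicThm: for a sequence
with periodic dependence satisfying AIM(xₙ) and `n·F̄(xₙ) → τ > 0`, for each fixed
`k ≥ 1`, with `n′ = ⌊n/k⌋`: `P(Mₙ ≤ xₙ) − [P(M_{n′} ≤ xₙ)]^k → 0`. -/
theorem stmt14 {Ω : Type*} [MeasurableSpace Ω] (P : Measure Ω) [IsProbabilityMeasure P]
    (X : ℕ → Ω → ℝ) (F : ℝ → ℝ) (xs : ℕ → ℝ) (q : ℕ → ℕ) (α : ℕ → ℝ)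
    (d : ℕ) (hd : 1 ≤ d) (hper : PeriodicDep P X d)
    (τ : ℝ) (hτ : 0 < τ)
    (hmeas : ∀ i, Measurable (X i))
    (hF : ∀ i, 1 ≤ i → ∀ t : ℝ, pr P {ω | X i ω ≤ t} = F t)
    (hqpos : ∀ m, 1 ≤ q m)
    (hq : (fun n : ℕ => (q n : ℝ)) =o[atTop] (fun n : ℕ => (n : ℝ)))
    (hα : Tendsto α atTop (nhds 0))
    (hbd : AIMBound P X xs q α)
    (hFbar : Tendsto (fun n : ℕ => (n : ℝ) * (1 - F (xs n))) atTop (nhds τ))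
    (k : ℕ) (hk : 1 ≤ k) :
    Tendsto (fun n : ℕ =>
      pr P (allLe X (Set.Icc 1 n) (xs n)) -
        (pr P (allLe X (Set.Icc 1 (n / k)) (xs n))) ^ k)
      atTop (nhds 0) :=
  stmt14_general P X F xs q α d hd hper τ hmeas hF hq hα hbd hFbar k hk
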